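/- arXiv:2211.04691 — 2 statements merged into one kernel-verified Lean document; each statement's English description precedes it below -/
import Mathlib

section
/- Let P(x,y,z) = (f·x/z, f·y/z) with f > 0. Fix z > 0, and for each integer pair (k,l) let T_{kl} be the unique point at depth z with P(T_{kl}) = (k + 1/2, l + 1/2). Then for any point p at depth z with ⌊P(p)⌋ = (k,l), the point T_{kl} is the strictly nearest point to p among all {T_{ij}} whenever P(p) is not on the boundary of the unit cell, i.e., the cell {q at depth z : ⌊P(q)⌋ = (k,l)} is contained in the closed Voronoi cell of T_{kl} with respect to the set {T_{ij}}_{(i,j)∈ℤ²}. -/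
/-!
Perspective projection at a fixed depth `z` is a similarity of ratio `f / z`, and it carries the
XY-adjustment `T_{ij}` to the centre of the unit screen cell `(i, j)`. So it suffices to show that a
point of the screen is at least as close to the centre of its own unit cell as to any other cell
centre, which holds coordinatewise: if `⌊u⌋ = k`, then `u` lies within `1/2` of `k + 1/2` and at
least `1/2` away from every other `i + 1/2`, with equality only when `u = k` and `i = k - 1`.
-/

/-- Euclidean distance in the plane at fixed depth. -/
noncomputable def dist2 (a b : ℝ × ℝ) : ℝ :=
  Real.sqrt ((a.1 - b.1) ^ 2 + (a.2 - b.2) ^ 2)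

/-- XY-adjustment: the point at depth `z` projecting to the center `(k+1/2, l+1/2)`
of the screen cell `(k,l)` (identified with its XY-coordinates). -/
noncomputable def XYadj (f z : ℝ) (k l : ℤ) : ℝ × ℝ :=
  (((k : ℝ) + 1 / 2) * z / f, ((l : ℝ) + 1 / 2) * z / f)

noncomputable def cellCenter (i j : ℤ) : ℝ × ℝ :=
  ((i : ℝ) + 1 / 2, (j : ℝ) + 1 / 2)

lemma sq_sub_floor_add_half_le (u : ℝ) (i : ℤ) :
    (u - ((⌊u⌋ : ℝ) + 1 / 2)) ^ 2 ≤ (u - ((i : ℝ) + 1 / 2)) ^ 2 := by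
  have hlo := Int.floor_le u
  have hhi := Int.lt_floor_add_one u
  rcases lt_trichotomy i ⌊u⌋ with hi | rfl | hi
  · have : (i : ℝ) ≤ ⌊u⌋ - 1 := by exact_mod_cast Int.le_sub_one_iff.mpr hi
    nlinarith
  · rfl
  · have : (⌊u⌋ : ℝ) + 1 ≤ i := by exact_mod_cast hi
    nlinarith

lemma sq_sub_floor_add_half_lt {u : ℝ} {i : ℤ} (hu : u ≠ ⌊u⌋) (hi : i ≠ ⌊u⌋) :
    (u - ((⌊u⌋ : ℝ) + 1 / 2)) ^ 2 < (u - ((i : ℝ) + 1 / 2)) ^ 2 := by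
  have hlo : (⌊u⌋ : ℝ) < u := (Int.floor_le u).lt_of_ne' hu
  have hhi := Int.lt_floor_add_one u
  rcases hi.lt_or_gt with hi | hi
  · have : (i : ℝ) ≤ ⌊u⌋ - 1 := by exact_mod_cast Int.le_sub_one_iff.mpr hi
    nlinarith
  · have : (⌊u⌋ : ℝ) + 1 ≤ i := by exact_mod_cast hi
    nlinarith

lemma dist2_cellCenter_floor_le (q : ℝ × ℝ) (i j : ℤ) :
    dist2 q (cellCenter ⌊q.1⌋ ⌊q.2⌋) ≤ dist2 q (cellCenter i j) :=
  Real.sqrt_le_sqrt <|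
    add_le_add (sq_sub_floor_add_half_le q.1 i) (sq_sub_floor_add_half_le q.2 j)

lemma dist2_cellCenter_floor_lt {q : ℝ × ℝ} (h₁ : q.1 ≠ ⌊q.1⌋) (h₂ : q.2 ≠ ⌊q.2⌋) {i j : ℤ}
    (hij : (i, j) ≠ (⌊q.1⌋, ⌊q.2⌋)) :
    dist2 q (cellCenter ⌊q.1⌋ ⌊q.2⌋) < dist2 q (cellCenter i j) := by
  refine Real.sqrt_lt_sqrt (by positivity) ?_
  by_cases hi : i = ⌊q.1⌋
  · have hj : j ≠ ⌊q.2⌋ := fun hj => hij (by rw [hi, hj])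
    exact add_lt_add_of_le_of_lt (sq_sub_floor_add_half_le q.1 i)
      (sq_sub_floor_add_half_lt h₂ hj)
  · exact add_lt_add_of_lt_of_le (sq_sub_floor_add_half_lt h₁ hi)
      (sq_sub_floor_add_half_le q.2 j)

lemma dist2_XYadj {f z : ℝ} (hf : f ≠ 0) (hz : z ≠ 0) (p : ℝ × ℝ) (i j : ℤ) :
    dist2 p (XYadj f z i j) = |z / f| * dist2 (f * p.1 / z, f * p.2 / z) (cellCenter i j) := by
  unfold dist2 XYadj cellCenter
  rw [← Real.sqrt_sq_eq_abs, ← Real.sqrt_mul (sq_nonneg _)]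
  congr 1
  field_simp

theorem cell_in_voronoi (f z : ℝ) (hf : 0 < f) (hz : 0 < z) (k l : ℤ)
    (p : ℝ × ℝ) (hp : ⌊f * p.1 / z⌋ = k ∧ ⌊f * p.2 / z⌋ = l) :
    (∀ i j : ℤ, dist2 p (XYadj f z k l) ≤ dist2 p (XYadj f z i j)) ∧
    ((f * p.1 / z ≠ (k : ℝ) ∧ f * p.2 / z ≠ (l : ℝ)) →
      ∀ i j : ℤ, (i, j) ≠ (k, l) →
        dist2 p (XYadj f z k l) < dist2 p (XYadj f z i j)) := by
  obtain ⟨rfl, rfl⟩ := hp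
  simp only [dist2_XYadj hf.ne' hz.ne']
  have hscale : 0 < |z / f| := by positivity
  refine ⟨fun i j => ?_, fun ⟨h₁, h₂⟩ i j hij => ?_⟩
  · exact mul_le_mul_of_nonneg_left (dist2_cellCenter_floor_le _ i j) hscale.le
  · exact mul_lt_mul_of_pos_left (dist2_cellCenter_floor_lt h₁ h₂ hij) hscale
end

section
/- Let P(x,y,z) = (f·x/z, f·y/z) with f > 0 and fix z > 0. Let p' = (x+a, y+b, z) and p̃ = (x+ã, y+b̃, z). If ⌊P(p')⌋ = ⌊P(p̃)⌋ then ‖(a,b) - (ã,b̃)‖∞ < z/f. -/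
theorem abs_sub_lt_inv_of_floor_mul_eq {K : Type*} [Field K] [LinearOrder K]
    [IsStrictOrderedRing K] [FloorRing K] {c s t : K} (hc : 0 < c)
    (h : ⌊c * s⌋ = ⌊c * t⌋) : |s - t| < c⁻¹ := by
  have hlt : c * |s - t| < 1 := by
    simpa only [← mul_sub, abs_mul, abs_of_pos hc] using Int.abs_sub_lt_one_of_floor_eq_floor h
  rwa [← lt_inv_mul_iff₀ hc, mul_one] at hlt

theorem abs_sub_lt_div_of_floor_perspective_eq {K : Type*} [Field K] [LinearOrder K]
    [IsStrictOrderedRing K] [FloorRing K] {f z w u v : K} (hf : 0 < f) (hz : 0 < z)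
    (h : ⌊f * (w + u) / z⌋ = ⌊f * (w + v) / z⌋) : |u - v| < z / f := by
  simp only [mul_div_right_comm f] at h
  simpa only [add_sub_add_left_eq_sub, inv_div] using
    abs_sub_lt_inv_of_floor_mul_eq (div_pos hf hz) h

theorem same_cell_translation_bound (f z x y a b ta tb : ℝ)
    (hf : 0 < f) (hz : 0 < z)
    (hfloor : ⌊f * (x + a) / z⌋ = ⌊f * (x + ta) / z⌋ ∧
              ⌊f * (y + b) / z⌋ = ⌊f * (y + tb) / z⌋) :
    |a - ta| < z / f ∧ |b - tb| < z / f :=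
  ⟨abs_sub_lt_div_of_floor_perspective_eq hf hz hfloor.1,
    abs_sub_lt_div_of_floor_perspective_eq hf hz hfloor.2⟩
end
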